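/- Let L ≥ 2, D ≥ 1, and V ≥ 1 be integers. Let X ∈ ℝ^{L×D} have rows X^1, …, X^L of Euclidean norm 1 with all pairwise inner products nonnegative (⟨X^{l1}, X^{l2}⟩ ≥ 0 for all l1, l2). Let g ∈ ℝ^D be a scaling vector and W ∈ ℝ^{D×V} an unembedding matrix. For each l define logits Z^l ∈ ℝ^V by Z^l_k = ∑_j X^l_j · g_j · W_{jk} (i.e., Z^l = X^l · diag(g) · W) and probabilities P^l = softmax(Z^l), where softmax(z)_i = exp(z_i)/∑_j exp(z_j). Then the minimum total variation distance between the output distributions of distinct tokens satisfies min_{l1 ≠ l2} (1/2)·∑_{k} |P^{l1}_k − P^{l2}_k| ≤ (√V / 2) · ‖diag(g)·W‖_2 · √( 2 − 2·√( (1/(L−1)) · (L/eRank(X) − 1) ) ). -/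

import Mathlib

/-!
Softmax is `1`-Lipschitz for the Euclidean norm: along the segment between two logit vectors its
derivative is the Jacobian `diag p - p pᵀ` applied to the direction, and a weighted-variance
estimate bounds its norm by that of the direction. Hence the total variation distance between the
outputs of two tokens is at most `√V / 2` times the distance of their logits, which is at most
`‖diag(g) W‖₂ · ‖X^a - X^b‖ = ‖diag(g) W‖₂ · √(2 - 2⟨X^a, X^b⟩)`.

It remains to find two distinct rows with a large inner product. The trace of `XᵀX` is `L`, and
with `p_j = λ_j / L` Shannon entropy dominates collision entropy, so
`eRank X ≥ 1 / ∑ p_j² = L² / ∑_{a,b} ⟨X^a, X^b⟩²`. Thus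
`L / eRank X - 1 ≤ ∑_{a ≠ b} ⟨X^a, X^b⟩² / L`, and some off-diagonal `⟨X^a, X^b⟩²` is at least
the average `(L / eRank X - 1) / (L - 1)`.
-/

open Matrix
open scoped Matrix.Norms.L2Operator

/-- `XᵀX` is Hermitian (symmetric) for a real matrix `X`. -/
theorem xtx_isHermitian {L D : ℕ} (X : Matrix (Fin L) (Fin D) ℝ) :
    (Xᵀ * X).IsHermitian := by
  simpa [Matrix.conjTranspose_eq_transpose_of_trivial] using
    Matrix.isHermitian_conjTranspose_mul_self X

/-- The effective rank `eRank(X) = exp(−∑_j p_j log p_j)`, where `λ_1, …, λ_D` are the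
eigenvalues (with multiplicity) of the positive semidefinite matrix `XᵀX` and
`p_j = λ_j / ∑_k λ_k` (with the convention `0 · log 0 = 0`). -/
noncomputable def eRank {L D : ℕ} (X : Matrix (Fin L) (Fin D) ℝ) : ℝ :=
  Real.exp (-∑ j,
    ((xtx_isHermitian X).eigenvalues j / ∑ k, (xtx_isHermitian X).eigenvalues k) *
      Real.log
        ((xtx_isHermitian X).eigenvalues j / ∑ k, (xtx_isHermitian X).eigenvalues k))

open Finset Real

noncomputable def softmax {ι : Type*} [Fintype ι] (z : ι → ℝ) : ι → ℝ :=
  fun k => exp (z k) / ∑ j, exp (z j)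

section Softmax

variable {ι : Type*} [Fintype ι]

lemma sum_softmax [Nonempty ι] (z : ι → ℝ) : ∑ k, softmax z k = 1 := by
  simp only [softmax]
  rw [← Finset.sum_div, div_self]
  exact (Finset.sum_pos (fun j _ => exp_pos (z j)) univ_nonempty).ne'

lemma softmax_nonneg (z : ι → ℝ) (k : ι) : 0 ≤ softmax z k := by
  unfold softmax; positivity

lemma hasDerivAt_softmax_add_smul [Nonempty ι] (z d : ι → ℝ) (t : ℝ) :
    HasDerivAt (fun s : ℝ => softmax (z + s • d))
      (fun k => softmax (z + t • d) k * (d k - ∑ j, softmax (z + t • d) j * d j)) t := by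
  have hexp (k : ι) : HasDerivAt (fun s : ℝ => exp ((z + s • d) k))
      (exp ((z + t • d) k) * d k) t := by
    simpa using ((hasDerivAt_mul_const (d k)).const_add (z k)).exp
  have hsum := HasDerivAt.fun_sum fun j (_ : j ∈ univ) => hexp j
  have hpos : 0 < ∑ j, exp ((z + t • d) j) :=
    Finset.sum_pos (fun j _ => exp_pos _) univ_nonempty
  rw [hasDerivAt_pi]
  intro k
  refine ((hexp k).div hsum hpos.ne').congr_deriv ?_
  simp only [softmax, div_mul_eq_mul_div, ← Finset.sum_div]
  field_simp

lemma sum_sq_mul_sub_weighted_mean_le {p : ι → ℝ} (hp : ∀ k, 0 ≤ p k)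
    (hp1 : ∑ k, p k = 1) (d : ι → ℝ) :
    ∑ k, (p k * (d k - ∑ j, p j * d j)) ^ 2 ≤ ∑ k, d k ^ 2 := by
  set m := ∑ j, p j * d j
  have hp_le_one (k : ι) : p k ≤ 1 :=
    hp1 ▸ Finset.single_le_sum (fun j _ => hp j) (mem_univ k)
  have hvar : ∑ k, p k * (d k - m) ^ 2 = ∑ k, p k * d k ^ 2 - m ^ 2 := by
    have hexpand (k : ι) :
        p k * (d k - m) ^ 2 = p k * d k ^ 2 - 2 * m * (p k * d k) + m ^ 2 * p k := by ring
    simp only [hexpand, Finset.sum_add_distrib, Finset.sum_sub_distrib, ← Finset.mul_sum, hp1]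
    ring
  calc ∑ k, (p k * (d k - m)) ^ 2 ≤ ∑ k, p k * (d k - m) ^ 2 := by
        gcongr with k
        rw [mul_pow]
        exact mul_le_mul_of_nonneg_right (by nlinarith [hp k, hp_le_one k]) (sq_nonneg _)
    _ ≤ ∑ k, p k * d k ^ 2 := by rw [hvar]; linarith [sq_nonneg m]
    _ ≤ ∑ k, d k ^ 2 := by
        gcongr with k
        exact mul_le_of_le_one_left (sq_nonneg _) (hp_le_one k)

theorem norm_softmax_sub_softmax_le (z z' : ι → ℝ) :
    ‖WithLp.toLp 2 (softmax z - softmax z')‖ ≤ ‖WithLp.toLp 2 (z - z')‖ := by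
  cases isEmpty_or_nonempty ι
  · simp [EuclideanSpace.norm_eq]
  set d := z - z'
  let J (t : ℝ) : ι → ℝ :=
    fun k => softmax (z' + t • d) k * (d k - ∑ j, softmax (z' + t • d) j * d j)
  have hγ (t : ℝ) : HasDerivAt (fun s : ℝ => WithLp.toLp 2 (softmax (z' + s • d)))
      (WithLp.toLp 2 (J t)) t :=
    (PiLp.hasFDerivAt_toLp 2 _).comp_hasDerivAt t (hasDerivAt_softmax_add_smul z' d t)
  have hJ (t : ℝ) : ‖WithLp.toLp 2 (J t)‖ ≤ ‖WithLp.toLp 2 d‖ := by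
    simp only [EuclideanSpace.norm_eq, Real.norm_eq_abs, sq_abs]
    exact Real.sqrt_le_sqrt
      (sum_sq_mul_sub_weighted_mean_le (softmax_nonneg _) (sum_softmax _) d)
  have hmvt := norm_image_sub_le_of_norm_deriv_le_segment' (fun t _ => (hγ t).hasDerivWithinAt)
    (fun t _ => hJ t) 1 (Set.right_mem_Icc.2 zero_le_one)
  simpa [d] using hmvt

end Softmax

lemma sum_abs_le_sqrt_card_mul_norm {ι : Type*} [Fintype ι] (v : ι → ℝ) :
    ∑ k, |v k| ≤ √(Fintype.card ι) * ‖WithLp.toLp 2 v‖ := by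
  rw [EuclideanSpace.norm_eq, ← Real.sqrt_mul (Nat.cast_nonneg _)]
  refine Real.le_sqrt_of_sq_le ?_
  simpa [sq_abs] using sq_sum_le_card_mul_sum_sq (s := univ) (f := fun k => |v k|)

lemma norm_toLp_vecMul_le {m n : Type*} [Fintype m] [Fintype n] [DecidableEq m] [DecidableEq n]
    (M : Matrix m n ℝ) (v : m → ℝ) :
    ‖WithLp.toLp 2 (v ᵥ* M)‖ ≤ ‖M‖ * ‖WithLp.toLp 2 v‖ := by
  have hT : ‖Mᵀ‖ = ‖M‖ := by
    rw [← conjTranspose_eq_transpose_of_trivial, l2_opNorm_conjTranspose]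
  rw [← mulVec_transpose, ← hT]
  exact l2_opNorm_mulVec Mᵀ (WithLp.toLp 2 v)

lemma norm_toLp_sub_of_sum_sq_eq_one {ι : Type*} [Fintype ι] {x y : ι → ℝ}
    (hx : ∑ j, x j ^ 2 = 1) (hy : ∑ j, y j ^ 2 = 1) :
    ‖WithLp.toLp 2 (x - y)‖ = √(2 - 2 * x ⬝ᵥ y) := by
  simp only [EuclideanSpace.norm_eq, Pi.sub_apply, Real.norm_eq_abs, sq_abs,
    sub_sq, Finset.sum_add_distrib, Finset.sum_sub_distrib, hx, hy, dotProduct, Finset.mul_sum]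
  ring_nf

lemma trace_transpose_mul_self {m n R : Type*} [Fintype m] [Fintype n] [CommSemiring R]
    (X : Matrix m n R) : (Xᵀ * X).trace = ∑ a, X a ⬝ᵥ X a := by
  simp only [trace, diag_apply, mul_apply, transpose_apply, dotProduct]
  exact Finset.sum_comm

lemma trace_transpose_mul_self_mul_self {m n R : Type*} [Fintype m] [Fintype n] [CommSemiring R]
    (X : Matrix m n R) : (Xᵀ * X * (Xᵀ * X)).trace = ∑ a, ∑ b, (X a ⬝ᵥ X b) ^ 2 := by
  have hcycle : (Xᵀ * X * (Xᵀ * X)).trace = (X * Xᵀ * (X * Xᵀ)).trace := by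
    simp only [Matrix.mul_assoc]
    rw [trace_mul_comm]
    simp only [Matrix.mul_assoc]
  have hgram (a b : m) : (X * Xᵀ) a b = X a ⬝ᵥ X b := rfl
  rw [hcycle, trace]
  refine Finset.sum_congr rfl fun a _ => ?_
  rw [diag_apply, mul_apply]
  refine Finset.sum_congr rfl fun b _ => ?_
  rw [hgram, hgram, dotProduct_comm (X b), sq]

lemma Matrix.IsHermitian.trace_mul_self_eq_sum_sq_eigenvalues {𝕜 n : Type*} [RCLike 𝕜]
    [Fintype n] [DecidableEq n] {A : Matrix n n 𝕜} (hA : A.IsHermitian) :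
    (A * A).trace = ∑ i, (hA.eigenvalues i : 𝕜) ^ 2 := by
  conv_lhs => rw [hA.spectral_theorem, ← map_mul, Unitary.conjStarAlgAut_apply, trace_mul_cycle,
    Unitary.coe_star_mul_self, one_mul, diagonal_mul_diagonal, trace_diagonal]
  simp [sq]

lemma inv_sum_sq_le_exp_entropy {ι : Type*} [Fintype ι] {p : ι → ℝ} (hp : ∀ i, 0 ≤ p i)
    (hp1 : ∑ i, p i = 1) : (∑ i, p i ^ 2)⁻¹ ≤ exp (-∑ i, p i * log (p i)) := by
  set Q := ∑ i, p i ^ 2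
  have hQ : 0 < Q := by
    have hcs := sq_sum_le_card_mul_sum_sq (s := univ) (f := p)
    rw [hp1] at hcs
    by_contra! h
    nlinarith [mul_nonpos_of_nonneg_of_nonpos (Nat.cast_nonneg (α := ℝ) #(univ : Finset ι)) h]
  -- `log x ≤ x - 1` at `x = p i / Q`, weighted by `p i`
  have hterm (i : ι) : p i * log (p i) ≤ p i * log Q + p i ^ 2 / Q - p i := by
    rcases (hp i).eq_or_lt with h | h
    · simp [← h]
    · have hlog := Real.log_le_sub_one_of_pos (div_pos h hQ)
      rw [Real.log_div h.ne' hQ.ne'] at hlog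
      have := mul_le_mul_of_nonneg_left hlog (hp i)
      rw [sq, mul_div_assoc]
      nlinarith
  have hentropy : ∑ i, p i * log (p i) ≤ log Q :=
    calc ∑ i, p i * log (p i) ≤ ∑ i, (p i * log Q + p i ^ 2 / Q - p i) :=
          sum_le_sum fun i _ => hterm i
      _ = log Q := by
        rw [sum_sub_distrib, sum_add_distrib, ← sum_mul, ← sum_div, hp1, div_self hQ.ne']
        ring
  calc Q⁻¹ = exp (-log Q) := by rw [exp_neg, exp_log hQ]
    _ ≤ exp (-∑ i, p i * log (p i)) := exp_le_exp.2 (neg_le_neg hentropy)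

lemma eRank_pos {L D : ℕ} (X : Matrix (Fin L) (Fin D) ℝ) : 0 < _root_.eRank X :=
  exp_pos _

lemma sq_trace_div_le_eRank {L D : ℕ} (X : Matrix (Fin L) (Fin D) ℝ) :
    (Xᵀ * X).trace ^ 2 / (Xᵀ * X * (Xᵀ * X)).trace ≤ _root_.eRank X := by
  set μ := (xtx_isHermitian X).eigenvalues
  have hμ (i : Fin D) : 0 ≤ μ i := eigenvalues_conjTranspose_mul_self_nonneg X i
  have htrace : (Xᵀ * X).trace = ∑ i, μ i := by
    simpa using (xtx_isHermitian X).trace_eq_sum_eigenvalues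
  have htrace_sq : (Xᵀ * X * (Xᵀ * X)).trace = ∑ i, μ i ^ 2 := by
    simpa using (xtx_isHermitian X).trace_mul_self_eq_sum_sq_eigenvalues
  rw [htrace, htrace_sq]
  rcases (sum_nonneg fun i _ => hμ i).eq_or_lt' with hs | hs
  · rw [hs, sq, zero_mul, zero_div]
    exact (eRank_pos X).le
  set p := fun i => μ i / ∑ k, μ k
  have hp1 : ∑ i, p i = 1 := by rw [← sum_div, div_self hs.ne']
  have hsum_sq : ∑ i, p i ^ 2 = (∑ i, μ i ^ 2) / (∑ i, μ i) ^ 2 := by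
    simp only [p, div_pow, sum_div]
  calc (∑ i, μ i) ^ 2 / ∑ i, μ i ^ 2 = (∑ i, p i ^ 2)⁻¹ := by rw [hsum_sq, inv_div]
    _ ≤ _ := inv_sum_sq_le_exp_entropy (fun i => div_nonneg (hμ i) hs.le) hp1

lemma exists_mem_offDiag_sum_sub_card_div_le {ι : Type*} [Fintype ι] [DecidableEq ι]
    [Nontrivial ι] (f : ι → ι → ℝ) (hf : ∀ a, f a a = 1) :
    ∃ p ∈ (univ : Finset ι).offDiag,
      (∑ a, ∑ b, f a b - Fintype.card ι) / (Fintype.card ι * (Fintype.card ι - 1)) ≤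
        f p.1 p.2 := by
  have hne : (univ : Finset ι).offDiag.Nonempty := by
    obtain ⟨a, b, hab⟩ := exists_pair_ne ι
    exact ⟨(a, b), by simpa using hab⟩
  have hcard : (#(univ : Finset ι).offDiag : ℝ) = Fintype.card ι * (Fintype.card ι - 1) := by
    rw [offDiag_card, card_univ, Nat.cast_sub (Nat.le_mul_self _)]
    push_cast
    ring
  have hsum : ∑ p ∈ univ.offDiag, f p.1 p.2 = ∑ a, ∑ b, f a b - Fintype.card ι := by
    have hsplit : ∑ a, ∑ b, f a b = ∑ p ∈ univ.diag ∪ univ.offDiag, f p.1 p.2 := by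
      rw [diag_union_offDiag, univ_product_univ, Fintype.sum_prod_type']
    rw [hsplit, sum_union (disjoint_diag_offDiag _), sum_diag]
    simp [hf]
  apply exists_le_of_sum_le hne
  rw [sum_const, nsmul_eq_mul, ← hcard, hsum, mul_div_cancel₀]
  exact_mod_cast hne.card_pos.ne'

lemma exists_mem_offDiag_sqrt_eRank_le_dotProduct {L D : ℕ} (hL : 2 ≤ L)
    (X : Matrix (Fin L) (Fin D) ℝ) (hrow : ∀ l, ∑ j, X l j ^ 2 = 1)
    (hnonneg : ∀ a b, 0 ≤ X a ⬝ᵥ X b) :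
    ∃ q ∈ (univ : Finset (Fin L)).offDiag,
      √((1 / ((L : ℝ) - 1)) * ((L : ℝ) / _root_.eRank X - 1)) ≤ X q.1 ⬝ᵥ X q.2 := by
  have hunit (a : Fin L) : X a ⬝ᵥ X a = 1 := by simpa [dotProduct, sq] using hrow a
  set S := ∑ a, ∑ b, (X a ⬝ᵥ X b) ^ 2
  have hL1 : (1 : ℝ) < L := by exact_mod_cast hL
  have hS : (L : ℝ) ≤ S :=
    calc (L : ℝ) = ∑ a, (X a ⬝ᵥ X a) ^ 2 := by simp [hunit]
      _ ≤ S := Finset.sum_le_sum fun a _ =>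
        Finset.single_le_sum (fun b _ => sq_nonneg (X a ⬝ᵥ X b)) (mem_univ a)
  have hE : (L : ℝ) ^ 2 / S ≤ _root_.eRank X := by
    simpa [trace_transpose_mul_self, trace_transpose_mul_self_mul_self, hunit] using
      sq_trace_div_le_eRank X
  have hLE : (L : ℝ) / _root_.eRank X ≤ S / L := by
    rw [div_le_div_iff₀ (eRank_pos X) (by linarith), ← sq]
    rwa [div_le_iff₀ (by linarith), mul_comm] at hE
  have : Nontrivial (Fin L) := Fin.nontrivial_iff_two_le.2 hL
  obtain ⟨q, hq, hle⟩ := exists_mem_offDiag_sum_sub_card_div_le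
    (fun a b => (X a ⬝ᵥ X b) ^ 2) (fun a => by simp [hunit])
  rw [Fintype.card_fin] at hle
  have hbound : (1 / ((L : ℝ) - 1)) * ((L : ℝ) / _root_.eRank X - 1) ≤
      (S - L) / (L * (L - 1)) :=
    calc (1 / ((L : ℝ) - 1)) * ((L : ℝ) / _root_.eRank X - 1)
        ≤ (1 / ((L : ℝ) - 1)) * (S / L - 1) :=
          mul_le_mul_of_nonneg_left (by linarith) (by rw [one_div_nonneg]; linarith)
      _ = (S - L) / (L * (L - 1)) := by field_simp
  refine ⟨q, hq, ?_⟩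
  calc √((1 / ((L : ℝ) - 1)) * ((L : ℝ) / _root_.eRank X - 1))
      ≤ √((X q.1 ⬝ᵥ X q.2) ^ 2) := Real.sqrt_le_sqrt (hbound.trans hle)
    _ = X q.1 ⬝ᵥ X q.2 := Real.sqrt_sq (hnonneg _ _)

theorem probability_distinguishability_bound_general (L D V : ℕ)
    (hL : 2 ≤ L)
    (X : Matrix (Fin L) (Fin D) ℝ)
    (hrow : ∀ l, ∑ j, (X l j) ^ 2 = 1)
    (hnonneg : ∀ l1 l2, 0 ≤ ∑ j, X l1 j * X l2 j)
    (g : Fin D → ℝ) (W : Matrix (Fin D) (Fin V) ℝ)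
    (Z : Fin L → Fin V → ℝ) (hZ : ∀ l k, Z l k = ∑ j, X l j * g j * W j k)
    (P : Fin L → Fin V → ℝ)
    (hP : ∀ l k, P l k = Real.exp (Z l k) / ∑ j, Real.exp (Z l j))
    (hne : (Finset.univ.filter fun p : Fin L × Fin L => p.1 ≠ p.2).Nonempty) :
    (Finset.univ.filter fun p : Fin L × Fin L => p.1 ≠ p.2).inf' hne
        (fun p => (1 / 2) * ∑ k, |P p.1 k - P p.2 k|) ≤
      (Real.sqrt V / 2) * ‖Matrix.diagonal g * W‖ *
        Real.sqrt (2 - 2 * Real.sqrt ((1 / ((L : ℝ) - 1)) * ((L : ℝ) / _root_.eRank X - 1))) := by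
  obtain ⟨q, hq, hclose⟩ := exists_mem_offDiag_sqrt_eRank_le_dotProduct hL X hrow hnonneg
  have hP' (l : Fin L) : P l = softmax (Z l) := funext (hP l)
  have hZ' (l : Fin L) : Z l = X l ᵥ* (diagonal g * W) := by
    ext k
    simp [hZ, vecMul, dotProduct, diagonal_mul, mul_assoc]
  calc _ ≤ 1 / 2 * ∑ k, |P q.1 k - P q.2 k| :=
      Finset.inf'_le _ (b := q) (by simpa using hq)
    _ ≤ 1 / 2 * (√V * ‖WithLp.toLp 2 (P q.1 - P q.2)‖) := by
        gcongr
        simpa using sum_abs_le_sqrt_card_mul_norm (P q.1 - P q.2)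
    _ ≤ 1 / 2 * (√V * ‖WithLp.toLp 2 (Z q.1 - Z q.2)‖) := by
        rw [hP', hP']
        gcongr
        exact norm_softmax_sub_softmax_le _ _
    _ ≤ 1 / 2 * (√V * (‖diagonal g * W‖ * ‖WithLp.toLp 2 (X q.1 - X q.2)‖)) := by
        rw [hZ', hZ', ← sub_vecMul]
        gcongr
        exact norm_toLp_vecMul_le _ _
    _ ≤ 1 / 2 * (√V * (‖diagonal g * W‖ *
          √(2 - 2 * √((1 / ((L : ℝ) - 1)) * ((L : ℝ) / _root_.eRank X - 1))))) := by
        rw [norm_toLp_sub_of_sum_sq_eq_one (hrow _) (hrow _)]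
        gcongr
    _ = _ := by ring

/-- **Probability Distinguishability Bound**: with unit-norm rows `X^l` having
pairwise nonnegative inner products, logits `Z^l = X^l · diag(g) · W` and output
distributions `P^l = softmax(Z^l)`, the minimum total variation distance between the
output distributions of distinct tokens is at most
`(√V / 2) · ‖diag(g)·W‖₂ · √(2 − 2·√((1/(L−1)) · (L/eRank(X) − 1)))`,
where `‖·‖₂` is the spectral (ℓ²→ℓ² operator) norm. -/
theorem probability_distinguishability_bound (L D V : ℕ)
    (hL : 2 ≤ L) (hD : 1 ≤ D) (hV : 1 ≤ V)
    (X : Matrix (Fin L) (Fin D) ℝ)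
    (hrow : ∀ l, ∑ j, (X l j) ^ 2 = 1)
    (hnonneg : ∀ l1 l2, 0 ≤ ∑ j, X l1 j * X l2 j)
    (g : Fin D → ℝ) (W : Matrix (Fin D) (Fin V) ℝ)
    (Z : Fin L → Fin V → ℝ) (hZ : ∀ l k, Z l k = ∑ j, X l j * g j * W j k)
    (P : Fin L → Fin V → ℝ)
    (hP : ∀ l k, P l k = Real.exp (Z l k) / ∑ j, Real.exp (Z l j))
    (hne : (Finset.univ.filter fun p : Fin L × Fin L => p.1 ≠ p.2).Nonempty) :
    (Finset.univ.filter fun p : Fin L × Fin L => p.1 ≠ p.2).inf' hne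
        (fun p => (1 / 2) * ∑ k, |P p.1 k - P p.2 k|) ≤
      (Real.sqrt V / 2) * ‖Matrix.diagonal g * W‖ *
        Real.sqrt (2 - 2 * Real.sqrt ((1 / ((L : ℝ) - 1)) * ((L : ℝ) / _root_.eRank X - 1))) :=
  probability_distinguishability_bound_general L D V hL X hrow hnonneg g W Z hZ P hP hne
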